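/- arXiv:1210.2428 — 3 statements merged into one kernel-verified Lean document; each statement's English description precedes it below -/
import Mathlib

section
/- The set 𝔤 of complex 5×5 matrices of the form with rows (α, β, γ, δ, 0), (β̄, ᾱ, γ̄, 0, -δ), (σ, σ̄, 0, -γ̄, -γ), (ρ, 0, -σ̄, -ᾱ, -β), (0, -ρ, -σ, -β̄, -α), where α,β,γ,σ ∈ ℂ and δ,ρ ∈ iℝ, is a real Lie subalgebra of the 5×5 complex matrices (i.e. closed under real scalar multiplication, addition, and matrix commutator), and it has real dimension 10. -/
open Matrix Complex

noncomputable section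

local notation "conj'" => (starRingEnd ℂ)

/-- The set `𝔤` of matrices of the stated shape, with `α,β,γ,σ ∈ ℂ` and `δ,ρ ∈ iℝ`. -/
def gSet : Set (Matrix (Fin 5) (Fin 5) ℂ) :=
  { X | ∃ α β γ σ δ ρ : ℂ, δ.re = 0 ∧ ρ.re = 0 ∧
      X = !![α, β, γ, δ, 0;
              conj' β, conj' α, conj' γ, 0, -δ;
              σ, conj' σ, 0, -conj' γ, -γ;
              ρ, 0, -conj' σ, -conj' α, -β;
              0, -ρ, -σ, -conj' β, -α] }

lemma gSet_smul_mem : ∀ X ∈ gSet, ∀ r : ℝ, r • X ∈ gSet := by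
  rintro X ⟨a,b,c,s,d,p,hd,hp,rfl⟩ r
  refine ⟨r•a, r•b, r•c, r•s, r•d, r•p, by simp [hd], by simp [hp], ?_⟩
  ext i j
  fin_cases i <;> fin_cases j <;>
    simp [Complex.real_smul, mul_comm]

lemma gSet_add_mem : ∀ X ∈ gSet, ∀ Y ∈ gSet, X + Y ∈ gSet := by
  rintro X ⟨a,b,c,s,d,p,hd,hp,rfl⟩ Y ⟨a',b',c',s',d',p',hd',hp',rfl⟩
  refine ⟨a+a', b+b', c+c', s+s', d+d', p+p', by simp [hd,hd'], by simp [hp,hp'], ?_⟩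
  ext i j
  fin_cases i <;> fin_cases j <;> simp [map_add] <;> ring

lemma gSet_zero_mem : (0 : Matrix (Fin 5) (Fin 5) ℂ) ∈ gSet := by
  refine ⟨0, 0, 0, 0, 0, 0, by simp, by simp, ?_⟩
  ext i j
  fin_cases i <;> fin_cases j <;> simp [vecHead, vecTail]

set_option maxHeartbeats 4000000 in
lemma gSet_lie_mem : ∀ X ∈ gSet, ∀ Y ∈ gSet, X * Y - Y * X ∈ gSet := by
  rintro X ⟨a,b,c,s,d,p,hd,hp,rfl⟩ Y ⟨a',b',c',s',d',p',hd',hp',rfl⟩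
  have hcd : conj' d = -d := by apply Complex.ext <;> simp [hd]
  have hcd' : conj' d' = -d' := by apply Complex.ext <;> simp [hd']
  have hcp : conj' p = -p := by apply Complex.ext <;> simp [hp]
  have hcp' : conj' p' = -p' := by apply Complex.ext <;> simp [hp']
  refine ⟨a*a' + b*conj' b' + c*s' + d*p' - (a'*a + b'*conj' b + c'*s + d'*p),
          a*b' + b*conj' a' + c*conj' s' - (a'*b + b'*conj' a + c'*conj' s),
          a*c' + b*conj' c' - d*conj' s' - (a'*c + b'*conj' c - d'*conj' s),
          s*a' + conj' s * conj' b' - conj' c * p' - (s'*a + conj' s' * conj' b - conj' c' * p),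
          a*d' - c*conj' c' - d*conj' a' - (a'*d - c'*conj' c - d'*conj' a),
          p*a' - conj' s * s' - conj' a * p' - (p'*a - conj' s' * s - conj' a' * p),
          ?_, ?_, ?_⟩
  · simp [Complex.sub_re, Complex.add_re, Complex.mul_re, Complex.conj_re, Complex.conj_im,
      hd, hd']
    ring
  · simp [Complex.sub_re, Complex.add_re, Complex.mul_re, Complex.conj_re, Complex.conj_im,
      hp, hp']
    ring
  · ext i j
    fin_cases i <;> fin_cases j <;>
      simp [Matrix.mul_apply, Fin.sum_univ_five,
        _root_.map_mul, _root_.map_add, map_sub, Complex.conj_conj,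
        hcd, hcd', hcp, hcp'] <;>
      ring

/-- `gSet` as a real submodule. -/
def gSub : Submodule ℝ (Matrix (Fin 5) (Fin 5) ℂ) where
  carrier := gSet
  add_mem' := fun {X} {Y} hX hY => gSet_add_mem X hX Y hY
  zero_mem' := gSet_zero_mem
  smul_mem' := fun r X hX => gSet_smul_mem X hX r

lemma span_eq_gSub : Submodule.span ℝ gSet = gSub := Submodule.span_eq gSub

def gMat (a b c s : ℂ) (d p : ℝ) : Matrix (Fin 5) (Fin 5) ℂ :=
  !![a, b, c, (d : ℂ)*I, 0;
     conj' b, conj' a, conj' c, 0, -((d : ℂ)*I);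
     s, conj' s, 0, -conj' c, -c;
     (p : ℂ)*I, 0, -conj' s, -conj' a, -b;
     0, -((p : ℂ)*I), -s, -conj' b, -a]

def gMap : (ℂ × ℂ × ℂ × ℂ × ℝ × ℝ) →ₗ[ℝ] Matrix (Fin 5) (Fin 5) ℂ where
  toFun q := gMat q.1 q.2.1 q.2.2.1 q.2.2.2.1 q.2.2.2.2.1 q.2.2.2.2.2
  map_add' q q' := by
    ext i j
    fin_cases i <;> fin_cases j <;>
      simp [gMat, map_add] <;> push_cast <;> ring
  map_smul' r q := by
    ext i j
    fin_cases i <;> fin_cases j <;>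
      simp [gMat, Complex.real_smul, Complex.conj_ofReal] <;> push_cast <;> ring

lemma gMap_inj : Function.Injective gMap := by
  rw [injective_iff_map_eq_zero]
  rintro ⟨a,b,c,s,d,p⟩ h
  have h' : ∀ i j, gMat a b c s d p i j = 0 := fun i j => congrFun (congrFun h i) j
  have h00 := h' 0 0; have h01 := h' 0 1; have h02 := h' 0 2
  have h20 := h' 2 0; have h03 := h' 0 3; have h30 := h' 3 0
  simp [gMat, Complex.ext_iff] at h00 h01 h02 h20 h03 h30
  simp_all [Prod.ext_iff, Complex.ext_iff]

lemma range_gMap : LinearMap.range gMap = gSub := by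
  apply le_antisymm
  · rintro X ⟨⟨a,b,c,s,d,p⟩, rfl⟩
    exact ⟨a, b, c, s, (d : ℂ)*I, (p : ℂ)*I, by simp, by simp, rfl⟩
  · rintro X ⟨a,b,c,s,d,p,hd,hp,rfl⟩
    refine ⟨(a, b, c, s, d.im, p.im), ?_⟩
    have h1 : ((d.im : ℂ))*I = d := by apply Complex.ext <;> simp [hd]
    have h2 : ((p.im : ℂ))*I = p := by apply Complex.ext <;> simp [hp]
    show gMat a b c s d.im p.im = _
    rw [gMat, h1, h2]

theorem stmt2 :
    (∀ X ∈ gSet, ∀ r : ℝ, r • X ∈ gSet) ∧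
    (∀ X ∈ gSet, ∀ Y ∈ gSet, X + Y ∈ gSet) ∧
    (∀ X ∈ gSet, ∀ Y ∈ gSet, X * Y - Y * X ∈ gSet) ∧
    (Submodule.span ℝ gSet : Set (Matrix (Fin 5) (Fin 5) ℂ)) = gSet ∧
    Module.finrank ℝ (Submodule.span ℝ gSet) = 10 := by
  refine ⟨gSet_smul_mem, gSet_add_mem, gSet_lie_mem, ?_, ?_⟩
  · rw [span_eq_gSub]; rfl
  · rw [span_eq_gSub, ← range_gMap, LinearMap.finrank_range_of_inj gMap_inj]
    simp [Module.finrank_prod, Complex.finrank_real_complex]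
end
end

section
/- Every matrix X in the set 𝔤 (as parametrized by α,β,γ,σ ∈ ℂ and δ,ρ ∈ iℝ) satisfies Xᵗ S + S X = 0 and Xᵗ T + T X̄ = 0, where S and T are the stated 5×5 matrices; conversely, every complex 5×5 matrix X satisfying both relations together with tr X = 0 belongs to 𝔤. -/
open Matrix Complex

noncomputable section

local notation "conj'" => (starRingEnd ℂ)

def S5 : Matrix (Fin 5) (Fin 5) ℂ :=
  !![0,0,0,0,1; 0,0,0,1,0; 0,0,1,0,0; 0,1,0,0,0; 1,0,0,0,0]

def T5 : Matrix (Fin 5) (Fin 5) ℂ :=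
  !![0,0,0,1,0; 0,0,0,0,1; 0,0,1,0,0; 1,0,0,0,0; 0,1,0,0,0]

/-!
`S5` and `T5` are the permutation matrices of the involutions `Fin.rev` and `tau`, so the two
relations say entrywise that `X a b = -X (rev b) (rev a)` and `conj (X a b) = -X (tau b) (tau a)`.
Every entry of `X` is tied by at most two of these identities to one of the six entries
`X 0 0, X 0 1, X 0 2, X 2 0, X 0 3, X 3 0`, or to its own negative; reading them off gives the
parametrization of `𝔤`, and `conj (X 0 3) = -X 0 3`, `conj (X 3 0) = -X 3 0` make `δ, ρ`
imaginary.
-/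

namespace Equiv.Perm

variable {n m R : Type*} [Fintype n] [DecidableEq n] (σ : Perm n)

theorem permMatrix_mul_apply [NonAssocSemiring R] (Y : Matrix n m R) (i : n) (j : m) :
    (σ.permMatrix R * Y) i j = Y (σ i) j := by
  simp [PEquiv.toMatrix_mul_apply]

theorem transpose_mul_permMatrix_apply [NonAssocSemiring R] (X : Matrix n m R) (i : m) (j : n) :
    (Xᵀ * σ.permMatrix R) i j = X (σ.symm j) i := by
  simp [PEquiv.mul_toMatrix_apply, ← Equiv.toPEquiv_symm]

theorem transpose_mul_permMatrix_add_permMatrix_mul_eq_zero_iff [NonAssocSemiring R]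
    (X Y : Matrix n n R) :
    Xᵀ * σ.permMatrix R + σ.permMatrix R * Y = 0 ↔
      ∀ i j, X (σ.symm j) i + Y (σ i) j = 0 := by
  simp only [← Matrix.ext_iff, Matrix.add_apply, transpose_mul_permMatrix_apply,
    permMatrix_mul_apply, Matrix.zero_apply]

theorem transpose_mul_permMatrix_add_permMatrix_mul_eq_zero_iff_of_involutive
    [NonAssocRing R] (hσ : Function.Involutive σ) (X Y : Matrix n n R) :
    Xᵀ * σ.permMatrix R + σ.permMatrix R * Y = 0 ↔ ∀ a b, Y a b = -X (σ b) (σ a) := by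
  rw [transpose_mul_permMatrix_add_permMatrix_mul_eq_zero_iff,
    Function.Involutive.symm_eq_self_of_involutive σ hσ]
  refine ⟨fun h a b ↦ ?_, fun h i j ↦ ?_⟩
  · rw [eq_neg_iff_add_eq_zero, add_comm]
    simpa only [hσ a] using h (σ a) b
  · rw [h, hσ i, add_neg_cancel]

end Equiv.Perm

theorem Complex.re_eq_zero_iff_conj_eq_neg {z : ℂ} : z.re = 0 ↔ conj' z = -z := by
  simp only [Complex.ext_iff, conj_re, conj_im, neg_re, neg_im, and_true]
  constructor <;> intro h <;> linarith

def tau : Fin 5 → Fin 5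
  | 0 => 3 | 1 => 4 | 2 => 2 | 3 => 0 | 4 => 1

theorem tau_involutive : Function.Involutive tau := by
  intro i; fin_cases i <;> rfl

theorem S5_eq_permMatrix : S5 = Fin.revPerm.permMatrix ℂ := by
  ext i j; fin_cases i <;> fin_cases j <;> simp [S5]

theorem T5_eq_permMatrix : T5 = tau_involutive.toPerm.permMatrix ℂ := by
  ext i j; fin_cases i <;> fin_cases j <;> simp [T5, tau]

section

variable {X : Matrix (Fin 5) (Fin 5) ℂ}

theorem transpose_mul_S5_add_S5_mul_eq_zero_iff :
    Xᵀ * S5 + S5 * X = 0 ↔ ∀ a b, X a b = -X (Fin.rev b) (Fin.rev a) :=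
  S5_eq_permMatrix ▸
    Fin.revPerm.transpose_mul_permMatrix_add_permMatrix_mul_eq_zero_iff_of_involutive
      Fin.rev_involutive X X

theorem transpose_mul_T5_add_T5_mul_conj_eq_zero_iff :
    Xᵀ * T5 + T5 * X.map conj' = 0 ↔ ∀ a b, conj' (X a b) = -X (tau b) (tau a) :=
  T5_eq_permMatrix ▸
    tau_involutive.toPerm.transpose_mul_permMatrix_add_permMatrix_mul_eq_zero_iff_of_involutive
      tau_involutive X (X.map conj')

theorem transpose_mul_S5_add_S5_mul_eq_zero_of_mem_gSet (hX : X ∈ gSet) :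
    Xᵀ * S5 + S5 * X = 0 := by
  obtain ⟨α, β, γ, σ, δ, ρ, -, -, rfl⟩ := hX
  rw [transpose_mul_S5_add_S5_mul_eq_zero_iff]
  intro a b
  fin_cases a <;> fin_cases b <;> simp

theorem transpose_mul_T5_add_T5_mul_conj_eq_zero_of_mem_gSet (hX : X ∈ gSet) :
    Xᵀ * T5 + T5 * X.map conj' = 0 := by
  obtain ⟨α, β, γ, σ, δ, ρ, hδ, hρ, rfl⟩ := hX
  rw [re_eq_zero_iff_conj_eq_neg] at hδ hρ
  rw [transpose_mul_T5_add_T5_mul_conj_eq_zero_iff]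
  intro a b
  fin_cases a <;> fin_cases b <;> simp [tau, hδ, hρ]

theorem mem_gSet_of_transpose_mul_add_mul_eq_zero (hS : Xᵀ * S5 + S5 * X = 0)
    (hT : Xᵀ * T5 + T5 * X.map conj' = 0) : X ∈ gSet := by
  rw [transpose_mul_S5_add_S5_mul_eq_zero_iff] at hS
  rw [transpose_mul_T5_add_T5_mul_conj_eq_zero_iff] at hT
  refine ⟨X 0 0, X 0 1, X 0 2, X 2 0, X 0 3, X 3 0,
    re_eq_zero_iff_conj_eq_neg.mpr (hT 0 3), re_eq_zero_iff_conj_eq_neg.mpr (hT 3 0), ?_⟩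
  ext a b
  fin_cases a <;> fin_cases b <;> simp <;> grind [tau]

end

theorem stmt3 :
    (∀ X ∈ gSet, Xᵀ * S5 + S5 * X = 0 ∧ Xᵀ * T5 + T5 * X.map conj' = 0) ∧
    (∀ X : Matrix (Fin 5) (Fin 5) ℂ,
      Xᵀ * S5 + S5 * X = 0 → Xᵀ * T5 + T5 * X.map conj' = 0 → X.trace = 0 → X ∈ gSet) :=
  ⟨fun _ hX ↦ ⟨transpose_mul_S5_add_S5_mul_eq_zero_of_mem_gSet hX,
      transpose_mul_T5_add_T5_mul_conj_eq_zero_of_mem_gSet hX⟩,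
    fun _ hS hT _ ↦ mem_gSet_of_transpose_mul_add_mul_eq_zero hS hT⟩
end
end

section
/- The Lie algebra 𝔤 of complex 5×5 matrices with rows (α, β, γ, δ, 0), (β̄, ᾱ, γ̄, 0, -δ), (σ, σ̄, 0, -γ̄, -γ), (ρ, 0, -σ̄, -ᾱ, -β), (0, -ρ, -σ, -β̄, -α) (α,β,γ,σ ∈ ℂ, δ,ρ ∈ iℝ) is isomorphic as a real Lie algebra to 𝔰𝔬(3,2), the Lie algebra of real 5×5 matrices X with Xᵗ J + J X = 0 for J = diag(1,1,1,-1,-1). -/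
open Matrix Complex

noncomputable section

local notation "conj'" => (starRingEnd ℂ)

def J5 : Matrix (Fin 5) (Fin 5) ℝ := diagonal ![1, 1, 1, -1, -1]

/-- The real Lie algebra `𝔰𝔬(3,2)` of real matrices `X` with `XᵀJ + JX = 0`. -/
def so32 : Set (Matrix (Fin 5) (Fin 5) ℝ) :=
  { X | Xᵀ * J5 + J5 * X = 0 }

/-- The explicit real-linear map realizing the isomorphism, defined entrywise.
It agrees on `𝔤` with `X ↦ Re (U⁻¹ X U)` for a suitable `U ∈ GL₅(ℂ)`. -/
def fMat (X : Matrix (Fin 5) (Fin 5) ℂ) : Matrix (Fin 5) (Fin 5) ℝ :=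
  !![0, -(X 0 0).im - ((X 0 3).im + (X 3 0).im)/2, (X 0 2).re - (X 2 0).re,
       (X 0 0).re + (X 0 1).re, (X 0 1).im + ((X 0 3).im - (X 3 0).im)/2;
     (X 0 0).im + ((X 0 3).im + (X 3 0).im)/2, 0, (X 0 2).im + (X 2 0).im,
       (X 0 1).im - ((X 0 3).im - (X 3 0).im)/2, (X 0 0).re - (X 0 1).re;
     -(X 0 2).re + (X 2 0).re, -(X 0 2).im - (X 2 0).im, 0,
       (X 0 2).re + (X 2 0).re, (X 0 2).im - (X 2 0).im;
     (X 0 0).re + (X 0 1).re, (X 0 1).im - ((X 0 3).im - (X 3 0).im)/2,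
       (X 0 2).re + (X 2 0).re, 0, -(X 0 0).im + ((X 0 3).im + (X 3 0).im)/2;
     (X 0 1).im + ((X 0 3).im - (X 3 0).im)/2, (X 0 0).re - (X 0 1).re,
       (X 0 2).im - (X 2 0).im, (X 0 0).im - ((X 0 3).im + (X 3 0).im)/2, 0]

set_option maxHeartbeats 4000000

def fLin : Matrix (Fin 5) (Fin 5) ℂ →ₗ[ℝ] Matrix (Fin 5) (Fin 5) ℝ where
  toFun := fMat
  map_add' X Y := by
    apply Matrix.ext; intro i j
    match i, j with
    | 0, 0 | 0, 1 | 0, 2 | 0, 3 | 0, 4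
    | 1, 0 | 1, 1 | 1, 2 | 1, 3 | 1, 4
    | 2, 0 | 2, 1 | 2, 2 | 2, 3 | 2, 4
    | 3, 0 | 3, 1 | 3, 2 | 3, 3 | 3, 4
    | 4, 0 | 4, 1 | 4, 2 | 4, 3 | 4, 4 =>
      simp [fMat, Matrix.add_apply] <;> ring
  map_smul' r X := by
    apply Matrix.ext; intro i j
    match i, j with
    | 0, 0 | 0, 1 | 0, 2 | 0, 3 | 0, 4
    | 1, 0 | 1, 1 | 1, 2 | 1, 3 | 1, 4
    | 2, 0 | 2, 1 | 2, 2 | 2, 3 | 2, 4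
    | 3, 0 | 3, 1 | 3, 2 | 3, 3 | 3, 4
    | 4, 0 | 4, 1 | 4, 2 | 4, 3 | 4, 4 =>
      simp [fMat, Matrix.smul_apply, Complex.real_smul, Complex.mul_re, Complex.mul_im] <;> ring

lemma fMat_g (α β γ σ δ ρ : ℂ) :
    fMat (!![α, β, γ, δ, 0;
              conj' β, conj' α, conj' γ, 0, -δ;
              σ, conj' σ, 0, -conj' γ, -γ;
              ρ, 0, -conj' σ, -conj' α, -β;
              0, -ρ, -σ, -conj' β, -α]) =
    !![0, -α.im - (δ.im + ρ.im)/2, γ.re - σ.re, α.re + β.re, β.im + (δ.im - ρ.im)/2;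
       α.im + (δ.im + ρ.im)/2, 0, γ.im + σ.im, β.im - (δ.im - ρ.im)/2, α.re - β.re;
       -γ.re + σ.re, -γ.im - σ.im, 0, γ.re + σ.re, γ.im - σ.im;
       α.re + β.re, β.im - (δ.im - ρ.im)/2, γ.re + σ.re, 0, -α.im + (δ.im + ρ.im)/2;
       β.im + (δ.im - ρ.im)/2, α.re - β.re, γ.im - σ.im, α.im - (δ.im + ρ.im)/2, 0] := by
  apply Matrix.ext; intro i j
  match i, j with
  | 0, 0 | 0, 1 | 0, 2 | 0, 3 | 0, 4
  | 1, 0 | 1, 1 | 1, 2 | 1, 3 | 1, 4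
  | 2, 0 | 2, 1 | 2, 2 | 2, 3 | 2, 4
  | 3, 0 | 3, 1 | 3, 2 | 3, 3 | 3, 4
  | 4, 0 | 4, 1 | 4, 2 | 4, 3 | 4, 4 => simp [fMat]

/-- `𝔤` is isomorphic, as a real Lie algebra, to `𝔰𝔬(3,2)`: there is a real-linear map
restricting to a bijection `𝔤 → 𝔰𝔬(3,2)` that preserves the commutator brackets. -/
theorem stmt4 :
    ∃ f : Matrix (Fin 5) (Fin 5) ℂ →ₗ[ℝ] Matrix (Fin 5) (Fin 5) ℝ,
      Set.BijOn f gSet so32 ∧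
      ∀ X ∈ gSet, ∀ Y ∈ gSet, f (X * Y - Y * X) = f X * f Y - f Y * f X := by
  have hf : (fLin : Matrix (Fin 5) (Fin 5) ℂ → Matrix (Fin 5) (Fin 5) ℝ) = fMat := rfl
  refine ⟨fLin, ⟨?_, ?_, ?_⟩, ?_⟩
  · -- MapsTo
    rintro X ⟨α, β, γ, σ, δ, ρ, hδ, hρ, rfl⟩
    show _ ∈ so32
    rw [hf, fMat_g]
    show _ * _ + _ * _ = 0
    apply Matrix.ext; intro i j
    match i, j with
    | 0, 0 | 0, 1 | 0, 2 | 0, 3 | 0, 4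
    | 1, 0 | 1, 1 | 1, 2 | 1, 3 | 1, 4
    | 2, 0 | 2, 1 | 2, 2 | 2, 3 | 2, 4
    | 3, 0 | 3, 1 | 3, 2 | 3, 3 | 3, 4
    | 4, 0 | 4, 1 | 4, 2 | 4, 3 | 4, 4 =>
      simp [J5, Matrix.mul_apply, Fin.sum_univ_five, Matrix.diagonal, Matrix.transpose_apply,
        Matrix.vecHead, Matrix.vecTail] <;> ring
  · -- InjOn
    rintro X ⟨α, β, γ, σ, δ, ρ, hδ, hρ, rfl⟩ Y ⟨α', β', γ', σ', δ', ρ', hδ', hρ', rfl⟩ h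
    rw [hf, fMat_g, fMat_g] at h
    have e : ∀ i j : Fin 5, _ = _ := fun i j => congrFun (congrFun h i) j
    have e03 := e 0 3; have e14 := e 1 4; have e10 := e 1 0; have e34 := e 3 4
    have e02 := e 0 2; have e23 := e 2 3; have e12 := e 1 2; have e24 := e 2 4
    have e04 := e 0 4; have e13 := e 1 3
    simp only [Matrix.cons_val_zero, Matrix.cons_val_one, Matrix.cons_val_two, Matrix.cons_val_three,
        Matrix.cons_val_four, Matrix.head_cons, Matrix.tail_cons, Matrix.cons_val',
        Matrix.cons_val_fin_one, Matrix.empty_val', Matrix.head_fin_const, Matrix.of_apply] at e03 e14 e10 e34 e02 e23 e12 e24 e04 e13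
    have hα : α = α' := Complex.ext (by linarith) (by linarith)
    have hβ : β = β' := Complex.ext (by linarith) (by linarith)
    have hγ : γ = γ' := Complex.ext (by linarith) (by linarith)
    have hσ : σ = σ' := Complex.ext (by linarith) (by linarith)
    have hδ2 : δ = δ' := Complex.ext (by rw [hδ, hδ']) (by linarith)
    have hρ2 : ρ = ρ' := Complex.ext (by rw [hρ, hρ']) (by linarith)
    rw [hα, hβ, hγ, hσ, hδ2, hρ2]
  · -- SurjOn
    rintro Y (hY : _ * _ + _ * _ = 0)
    have g : ∀ i j : Fin 5, (Yᵀ * J5 + J5 * Y) i j = 0 := by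
      intro i j; rw [hY]; rfl
    have h00 : Y 0 0 = 0 := by have := g 0 0; simp [J5, Matrix.mul_apply, Matrix.diagonal, Fin.sum_univ_five] at this; linarith
    have h11 : Y 1 1 = 0 := by have := g 1 1; simp [J5, Matrix.mul_apply, Matrix.diagonal, Fin.sum_univ_five] at this; linarith
    have h22 : Y 2 2 = 0 := by have := g 2 2; simp [J5, Matrix.mul_apply, Matrix.diagonal, Fin.sum_univ_five] at this; linarith
    have h33 : Y 3 3 = 0 := by have := g 3 3; simp [J5, Matrix.mul_apply, Matrix.diagonal, Fin.sum_univ_five] at this; linarith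
    have h44 : Y 4 4 = 0 := by have := g 4 4; simp [J5, Matrix.mul_apply, Matrix.diagonal, Fin.sum_univ_five] at this; linarith
    have h10 : Y 1 0 = -Y 0 1 := by have := g 0 1; simp [J5, Matrix.mul_apply, Matrix.diagonal, Fin.sum_univ_five] at this; linarith
    have h20 : Y 2 0 = -Y 0 2 := by have := g 0 2; simp [J5, Matrix.mul_apply, Matrix.diagonal, Fin.sum_univ_five] at this; linarith
    have h21 : Y 2 1 = -Y 1 2 := by have := g 1 2; simp [J5, Matrix.mul_apply, Matrix.diagonal, Fin.sum_univ_five] at this; linarith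
    have h30 : Y 3 0 = Y 0 3 := by have := g 0 3; simp [J5, Matrix.mul_apply, Matrix.diagonal, Fin.sum_univ_five] at this; linarith
    have h31 : Y 3 1 = Y 1 3 := by have := g 1 3; simp [J5, Matrix.mul_apply, Matrix.diagonal, Fin.sum_univ_five] at this; linarith
    have h32 : Y 3 2 = Y 2 3 := by have := g 2 3; simp [J5, Matrix.mul_apply, Matrix.diagonal, Fin.sum_univ_five] at this; linarith
    have h40 : Y 4 0 = Y 0 4 := by have := g 0 4; simp [J5, Matrix.mul_apply, Matrix.diagonal, Fin.sum_univ_five] at this; linarith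
    have h41 : Y 4 1 = Y 1 4 := by have := g 1 4; simp [J5, Matrix.mul_apply, Matrix.diagonal, Fin.sum_univ_five] at this; linarith
    have h42 : Y 4 2 = Y 2 4 := by have := g 2 4; simp [J5, Matrix.mul_apply, Matrix.diagonal, Fin.sum_univ_five] at this; linarith
    have h43 : Y 4 3 = -Y 3 4 := by have := g 3 4; simp [J5, Matrix.mul_apply, Matrix.diagonal, Fin.sum_univ_five] at this; linarith
    refine ⟨_, ⟨⟨(Y 0 3 + Y 1 4)/2, (Y 1 0 - Y 3 4)/2⟩, ⟨(Y 0 3 - Y 1 4)/2, (Y 0 4 + Y 1 3)/2⟩,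
      ⟨(Y 0 2 + Y 2 3)/2, (Y 1 2 + Y 2 4)/2⟩, ⟨(Y 2 3 - Y 0 2)/2, (Y 1 2 - Y 2 4)/2⟩,
      ⟨0, (Y 1 0 + Y 3 4 + Y 0 4 - Y 1 3)/2⟩, ⟨0, (Y 1 0 + Y 3 4 - Y 0 4 + Y 1 3)/2⟩,
      rfl, rfl, rfl⟩, ?_⟩
    rw [hf, fMat_g]
    apply Matrix.ext; intro i j
    match i, j with
    | 0, 0 | 0, 1 | 0, 2 | 0, 3 | 0, 4
    | 1, 0 | 1, 1 | 1, 2 | 1, 3 | 1, 4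
    | 2, 0 | 2, 1 | 2, 2 | 2, 3 | 2, 4
    | 3, 0 | 3, 1 | 3, 2 | 3, 3 | 3, 4
    | 4, 0 | 4, 1 | 4, 2 | 4, 3 | 4, 4 =>
      simp only [Matrix.cons_val_zero, Matrix.cons_val_one, Matrix.cons_val_two, Matrix.cons_val_three,
        Matrix.cons_val_four, Matrix.head_cons, Matrix.tail_cons, Matrix.cons_val',
        Matrix.cons_val_fin_one, Matrix.empty_val', Matrix.head_fin_const, Matrix.of_apply] <;>
      linarith [h00, h11, h22, h33, h44, h10, h20, h21, h30, h31, h32, h40, h41, h42, h43]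
  · -- bracket
    rintro X ⟨α, β, γ, σ, δ, ρ, hδ, hρ, rfl⟩ Y ⟨α', β', γ', σ', δ', ρ', hδ', hρ', rfl⟩
    rw [hf, fMat_g, fMat_g]
    apply Matrix.ext; intro i j
    match i, j with
    | 0, 0 | 0, 1 | 0, 2 | 0, 3 | 0, 4
    | 1, 0 | 1, 1 | 1, 2 | 1, 3 | 1, 4
    | 2, 0 | 2, 1 | 2, 2 | 2, 3 | 2, 4
    | 3, 0 | 3, 1 | 3, 2 | 3, 3 | 3, 4
    | 4, 0 | 4, 1 | 4, 2 | 4, 3 | 4, 4 =>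
      simp only [fMat, Matrix.sub_apply, Matrix.mul_apply, Fin.sum_univ_five,
        Matrix.cons_val_zero, Matrix.cons_val_one, Matrix.cons_val_two, Matrix.cons_val_three,
        Matrix.cons_val_four, Matrix.head_cons, Matrix.tail_cons, Matrix.cons_val',
        Matrix.cons_val_fin_one, Matrix.empty_val', Matrix.head_fin_const, Matrix.of_apply,
        Complex.add_re, Complex.add_im, Complex.sub_re, Complex.sub_im,
        Complex.neg_re, Complex.neg_im, Complex.mul_re, Complex.mul_im, Complex.conj_re,
        Complex.conj_im, Complex.zero_re, Complex.zero_im,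
        hδ, hρ, hδ', hρ'] <;> ring
end
end
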